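/- arXiv:2009.13564 — 10 statements merged into one kernel-verified Lean document; each statement's English description precedes it below -/
import Mathlib

section
/- Under the hypotheses of the previous statement, the consumption function w ↦ c(w) defined implicitly by the Euler equation u'(c(w)) = Σ_n π_n β_n R_n u'(R_n(w − c(w)) + Y_n) is continuously differentiable on (0,∞) with derivative c'(w) = (−Σ_n π_n β_n R_n² u''(R_n s + Y_n)) / (−u''(c) − Σ_n π_n β_n R_n² u''(R_n s + Y_n)) ∈ (0,1), where s = w − c(w). Consequently the saving function s(w) = w − c(w) satisfies s'(w) = 1 − c'(w) ∈ (0,1). -/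
open Set Filter Topology ContinuousLinearMap

/-!
Write `F(w, x) = u'(x) - ∑ₙ πₙ βₙ Rₙ u'(Rₙ (w - x) + Yₙ)` for the Euler residual. Since `u'` is
strictly decreasing, `x ↦ F(w, x)` is strictly decreasing on the feasible region (consumption
positive today and in every state tomorrow), so `c(w)` is the only zero of `F(w, ·)` there. The
partial derivatives are `∂F/∂w = -κ` and `∂F/∂x = u''(x) + κ`, where
`κ = ∑ₙ πₙ βₙ Rₙ² u''(Rₙ (w - x) + Yₙ) < 0`. As `∂F/∂x < 0`, the implicit function theorem gives
a local C¹ solution, which by uniqueness is `c` itself, and differentiating `F(w, c(w)) = 0` gives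
`c' = -κ / (-u''(c) - κ)`, a number in `(0, 1)`.
-/

section ImplicitFunction

variable {𝕜 : Type*} [RCLike 𝕜]
  {E₁ : Type*} [NormedAddCommGroup E₁] [NormedSpace 𝕜 E₁] [CompleteSpace E₁]
  {E₂ : Type*} [NormedAddCommGroup E₂] [NormedSpace 𝕜 E₂] [CompleteSpace E₂]
  {F : Type*} [NormedAddCommGroup F] [NormedSpace 𝕜 F] [CompleteSpace F]

theorem ContDiffAt.contDiffAt_of_levelSet_subset_graph {f : E₁ × E₂ → F} {g : E₁ → E₂}
    {x : E₁} {n : WithTop ℕ∞} (hf : ContDiffAt 𝕜 n f (x, g x)) (hn : n ≠ 0)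
    (hinv : (fderiv 𝕜 f (x, g x) ∘L .inr 𝕜 E₁ E₂).IsInvertible)
    (hg : ∀ᶠ v in 𝓝 (x, g x), f v = f (x, g x) → g v.1 = v.2) :
    ContDiffAt 𝕜 n g x := by
  set ψ := hf.implicitFunction hn hinv
  have hψ : ContDiffAt 𝕜 n ψ x := hf.contDiffAt_implicitFunction hn hinv
  have hgraph : Tendsto (fun y => (y, ψ y)) (𝓝 x) (𝓝 (x, g x)) := by
    have hψx : ψ x = g x := hf.implicitFunction_apply_self hn hinv
    simpa only [hψx, id] using tendsto_id.prodMk_nhds hψ.continuousAt.tendsto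
  have hg_eq : ψ =ᶠ[𝓝 x] g := by
    filter_upwards [hgraph.eventually hg, hf.eventually_apply_implicitFunction hn hinv]
      with y hy hlevel using (hy hlevel).symm
  exact hψ.congr_of_eventuallyEq hg_eq.symm

end ImplicitFunction

section Euler

variable {ι : Type*} [Fintype ι] {u' : ℝ → ℝ} {pr β R Y : ι → ℝ}

def eulerResidual (u' : ℝ → ℝ) (pr β R Y : ι → ℝ) (p : ℝ × ℝ) : ℝ :=
  u' p.2 - ∑ n, pr n * β n * R n * u' (R n * (p.1 - p.2) + Y n)

noncomputable def continuationCurvature (u' : ℝ → ℝ) (pr β R Y : ι → ℝ) (p : ℝ × ℝ) : ℝ :=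
  ∑ n, pr n * β n * R n ^ 2 * deriv u' (R n * (p.1 - p.2) + Y n)

def feasibleSet (R Y : ι → ℝ) : Set (ℝ × ℝ) :=
  {p | 0 < p.2 ∧ ∀ n, 0 < R n * (p.1 - p.2) + Y n}

theorem isOpen_feasibleSet : IsOpen (feasibleSet R Y) := by
  simp only [feasibleSet, ofPred_and, ofPred_forall]
  exact (isOpen_lt continuous_const continuous_snd).inter <| isOpen_iInter_of_finite fun n =>
    isOpen_lt continuous_const (by fun_prop)

theorem mk_mem_feasibleSet {w x : ℝ} (hR : ∀ n, 0 < R n) (hx : 0 < x)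
    (hxw : x < w + ⨅ n, Y n / R n) : (w, x) ∈ feasibleSet R Y := by
  refine ⟨hx, fun n => ?_⟩
  have hle : ⨅ n, Y n / R n ≤ Y n / R n := ciInf_le (Finite.bddBelow_range _) n
  have : -(Y n / R n) < w - x := by linarith
  have := mul_lt_mul_of_pos_left this (hR n)
  rw [mul_neg, mul_div_cancel₀ _ (hR n).ne'] at this
  linarith

theorem eulerResidual_lt_of_lt (hu' : StrictAntiOn u' (Ioi 0)) (hpr : ∀ n, 0 ≤ pr n)
    (hβ : ∀ n, 0 ≤ β n) (hR : ∀ n, 0 ≤ R n) {w x y : ℝ} (hx : (w, x) ∈ feasibleSet R Y)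
    (hy : (w, y) ∈ feasibleSet R Y) (hxy : x < y) :
    eulerResidual u' pr β R Y (w, y) < eulerResidual u' pr β R Y (w, x) := by
  have hnext : ∀ n, u' (R n * (w - x) + Y n) ≤ u' (R n * (w - y) + Y n) := fun n =>
    hu'.antitoneOn (hy.2 n) (hx.2 n) (by nlinarith [hR n])
  have hsum : ∑ n, pr n * β n * R n * u' (R n * (w - x) + Y n) ≤
      ∑ n, pr n * β n * R n * u' (R n * (w - y) + Y n) :=
    Finset.sum_le_sum fun n _ =>
      mul_le_mul_of_nonneg_left (hnext n) (mul_nonneg (mul_nonneg (hpr n) (hβ n)) (hR n))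
  have hnow : u' y < u' x := hu' hx.1 hy.1 hxy
  simp only [eulerResidual]
  linarith

theorem eq_of_eulerResidual_eq (hu' : StrictAntiOn u' (Ioi 0)) (hpr : ∀ n, 0 ≤ pr n)
    (hβ : ∀ n, 0 ≤ β n) (hR : ∀ n, 0 ≤ R n) {w x y : ℝ} (hx : (w, x) ∈ feasibleSet R Y)
    (hy : (w, y) ∈ feasibleSet R Y)
    (h : eulerResidual u' pr β R Y (w, x) = eulerResidual u' pr β R Y (w, y)) : x = y := by
  rcases lt_trichotomy x y with hxy | hxy | hxy
  · exact absurd h (eulerResidual_lt_of_lt hu' hpr hβ hR hx hy hxy).ne'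
  · exact hxy
  · exact absurd h (eulerResidual_lt_of_lt hu' hpr hβ hR hy hx hxy).ne

theorem continuationCurvature_nonpos (hu'' : ∀ x > 0, deriv u' x < 0) (hpr : ∀ n, 0 ≤ pr n)
    (hβ : ∀ n, 0 ≤ β n) {p : ℝ × ℝ} (hp : p ∈ feasibleSet R Y) :
    continuationCurvature u' pr β R Y p ≤ 0 :=
  Finset.sum_nonpos fun n _ =>
    mul_nonpos_of_nonneg_of_nonpos (mul_nonneg (mul_nonneg (hpr n) (hβ n)) (sq_nonneg _))
      (hu'' _ (hp.2 n)).le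

theorem continuationCurvature_neg [Nonempty ι] (hu'' : ∀ x > 0, deriv u' x < 0)
    (hpr : ∀ n, 0 < pr n) (hβ : ∀ n, 0 < β n) (hR : ∀ n, 0 < R n) {p : ℝ × ℝ}
    (hp : p ∈ feasibleSet R Y) : continuationCurvature u' pr β R Y p < 0 :=
  Finset.sum_neg (fun n _ => mul_neg_of_pos_of_neg
    (mul_pos (mul_pos (hpr n) (hβ n)) (pow_pos (hR n) 2)) (hu'' _ (hp.2 n))) Finset.univ_nonempty

theorem hasFDerivAt_eulerResidual (hu' : DifferentiableOn ℝ u' (Ioi 0)) {p : ℝ × ℝ}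
    (hp : p ∈ feasibleSet R Y) :
    HasFDerivAt (eulerResidual u' pr β R Y)
      ((-continuationCurvature u' pr β R Y p) • fst ℝ ℝ ℝ +
        (deriv u' p.2 + continuationCurvature u' pr β R Y p) • snd ℝ ℝ ℝ) p := by
  have hderiv : ∀ x > 0, HasDerivAt u' (deriv u' x) x := fun x hx =>
    (hu'.differentiableAt (Ioi_mem_nhds hx)).hasDerivAt
  have hnow : HasFDerivAt (fun q : ℝ × ℝ => u' q.2) (deriv u' p.2 • snd ℝ ℝ ℝ) p :=
    (hderiv _ hp.1).comp_hasFDerivAt p hasFDerivAt_snd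
  have hnext : ∀ n,
      HasFDerivAt (fun q : ℝ × ℝ => pr n * β n * R n * u' (R n * (q.1 - q.2) + Y n))
      ((pr n * β n * R n) • deriv u' (R n * (p.1 - p.2) + Y n) •
        R n • (fst ℝ ℝ ℝ - snd ℝ ℝ ℝ)) p := fun n =>
    ((hderiv _ (hp.2 n)).comp_hasFDerivAt p
      (((hasFDerivAt_fst.sub hasFDerivAt_snd).const_mul (R n)).add_const (Y n))).const_mul _
  refine (hnow.sub (HasFDerivAt.fun_sum (u := Finset.univ) fun n _ => hnext n)).congr_fderiv ?_
  ext <;> simp [continuationCurvature, pow_two, mul_assoc, mul_comm (deriv u' _)]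

theorem contDiffAt_eulerResidual {k : WithTop ℕ∞} (hu' : ContDiffOn ℝ k u' (Ioi 0))
    {p : ℝ × ℝ} (hp : p ∈ feasibleSet R Y) : ContDiffAt ℝ k (eulerResidual u' pr β R Y) p := by
  have hnow : ContDiffAt ℝ k (fun q : ℝ × ℝ => u' q.2) p :=
    (hu'.contDiffAt (Ioi_mem_nhds hp.1)).comp p contDiffAt_snd
  have hnext : ∀ n, ContDiffAt ℝ k (fun q : ℝ × ℝ => u' (R n * (q.1 - q.2) + Y n)) p := fun n =>
    (hu'.contDiffAt (Ioi_mem_nhds (hp.2 n))).comp p (by fun_prop)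
  exact hnow.sub (ContDiffAt.sum fun n _ => contDiffAt_const.mul (hnext n))

theorem deriv_add_continuationCurvature_neg (hu'' : ∀ x > 0, deriv u' x < 0)
    (hpr : ∀ n, 0 ≤ pr n) (hβ : ∀ n, 0 ≤ β n) {p : ℝ × ℝ} (hp : p ∈ feasibleSet R Y) :
    deriv u' p.2 + continuationCurvature u' pr β R Y p < 0 :=
  add_neg_of_neg_of_nonpos (hu'' _ hp.1) (continuationCurvature_nonpos hu'' hpr hβ hp)

variable {c : ℝ → ℝ} {w₀ : ℝ}

theorem contDiffAt_of_eulerResidual_eq_zero (hu' : ContDiffOn ℝ 1 u' (Ioi 0))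
    (hu'' : ∀ x > 0, deriv u' x < 0) (hpr : ∀ n, 0 ≤ pr n) (hβ : ∀ n, 0 ≤ β n)
    (hR : ∀ n, 0 ≤ R n)
    (hc : ∀ᶠ w in 𝓝 w₀, (w, c w) ∈ feasibleSet R Y ∧ eulerResidual u' pr β R Y (w, c w) = 0) :
    ContDiffAt ℝ 1 c w₀ := by
  have hanti : StrictAntiOn u' (Ioi 0) :=
    strictAntiOn_of_deriv_neg (convex_Ioi 0) hu'.continuousOn fun x hx =>
      hu'' x (interior_subset hx)
  obtain ⟨hfeas₀, hzero₀⟩ := hc.self_of_nhds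
  have hden := (deriv_add_continuationCurvature_neg hu'' hpr hβ hfeas₀).ne
  have hinv : (fderiv ℝ (eulerResidual u' pr β R Y) (w₀, c w₀) ∘L inr ℝ ℝ ℝ).IsInvertible := by
    -- the partial derivative in `x` is multiplication by `u''(c w₀) + κ`
    rw [(hasFDerivAt_eulerResidual (hu'.differentiableOn one_ne_zero) hfeas₀).fderiv]
    refine IsInvertible.of_inverse (g := (deriv u' (c w₀) +
      continuationCurvature u' pr β R Y (w₀, c w₀))⁻¹ • ContinuousLinearMap.id ℝ ℝ) ?_ ?_ <;>
    · ext; simp [hden]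
  refine (contDiffAt_eulerResidual hu' hfeas₀).contDiffAt_of_levelSet_subset_graph one_ne_zero
    hinv ?_
  have hgraph : Tendsto Prod.fst (𝓝 (w₀, c w₀)) (𝓝 w₀) := continuous_fst.tendsto _
  filter_upwards [hgraph.eventually hc, isOpen_feasibleSet.mem_nhds hfeas₀]
    with v ⟨hfeas, hzero⟩ hv hlevel
  exact eq_of_eulerResidual_eq hanti hpr hβ hR hfeas hv (hzero.trans (hlevel.trans hzero₀).symm)

theorem hasDerivAt_of_eulerResidual_eq_zero (hu' : DifferentiableOn ℝ u' (Ioi 0))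
    (hden : deriv u' (c w₀) + continuationCurvature u' pr β R Y (w₀, c w₀) ≠ 0)
    (hcd : DifferentiableAt ℝ c w₀)
    (hc : ∀ᶠ w in 𝓝 w₀, (w, c w) ∈ feasibleSet R Y ∧ eulerResidual u' pr β R Y (w, c w) = 0) :
    HasDerivAt c (-continuationCurvature u' pr β R Y (w₀, c w₀) /
      (-deriv u' (c w₀) - continuationCurvature u' pr β R Y (w₀, c w₀))) w₀ := by
  set κ := continuationCurvature u' pr β R Y (w₀, c w₀)
  have hchain : HasDerivAt (fun w => eulerResidual u' pr β R Y (w, c w))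
      (-κ + (deriv u' (c w₀) + κ) * deriv c w₀) w₀ := by
    have hF := hasFDerivAt_eulerResidual (pr := pr) (β := β) hu' hc.self_of_nhds.1
    have h := hF.comp_hasDerivAt w₀ ((hasDerivAt_id w₀).prodMk hcd.hasDerivAt)
    simp only [add_apply, smul_apply, coe_fst', coe_snd', smul_eq_mul, mul_one] at h
    exact h
  have hzero : -κ + (deriv u' (c w₀) + κ) * deriv c w₀ = 0 :=
    hchain.unique ((hasDerivAt_const w₀ 0).congr_of_eventuallyEq (hc.mono fun w hw => hw.2))
  refine hcd.hasDerivAt.congr_deriv ?_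
  rw [eq_div_iff (by contrapose! hden; linarith)]
  linarith

end Euler

theorem neg_div_neg_sub_mem_Ioo {a b : ℝ} (ha : a < 0) (hb : b < 0) :
    -b / (-a - b) ∈ Ioo 0 1 :=
  ⟨div_pos (neg_pos.mpr hb) (by linarith), (div_lt_one (by linarith)).mpr (by linarith)⟩

theorem consumption_C1_mpc_general (u : ℝ → ℝ)
    (hu : ContDiffOn ℝ 2 u (Set.Ioi 0))
    (hu'' : ∀ x > (0:ℝ), deriv (deriv u) x < 0)
    (N : ℕ) (hN : 0 < N)
    (pr β R Y : Fin N → ℝ)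
    (hpr : ∀ n, 0 < pr n) (hβ : ∀ n, 0 < β n) (hR : ∀ n, 0 < R n)
    (c : ℝ → ℝ)
    (hc : ∀ w > (0:ℝ), 0 < c w ∧ c w < w + ⨅ n, Y n / R n)
    (hEuler : ∀ w > (0:ℝ),
      deriv u (c w) = ∑ n, pr n * β n * R n * deriv u (R n * (w - c w) + Y n)) :
    ContDiffOn ℝ 1 c (Set.Ioi 0) ∧
    ∀ w > (0:ℝ),
      deriv c w =
        (-∑ n, pr n * β n * (R n)^2 * deriv (deriv u) (R n * (w - c w) + Y n)) /
        (-deriv (deriv u) (c w)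
          - ∑ n, pr n * β n * (R n)^2 * deriv (deriv u) (R n * (w - c w) + Y n)) ∧
      deriv c w ∈ Set.Ioo (0:ℝ) 1 ∧
      deriv (fun w => w - c w) w = 1 - deriv c w ∧
      (1 - deriv c w) ∈ Set.Ioo (0:ℝ) 1 := by
  have : Nonempty (Fin N) := Fin.pos_iff_nonempty.mp hN
  have hpr₀ : ∀ n, 0 ≤ pr n := fun n => (hpr n).le
  have hβ₀ : ∀ n, 0 ≤ β n := fun n => (hβ n).le
  have hu' : ContDiffOn ℝ 1 (deriv u) (Ioi 0) := hu.deriv_of_isOpen isOpen_Ioi (by norm_num)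
  have hsol : ∀ w > 0, ∀ᶠ w' in 𝓝 w, (w', c w') ∈ feasibleSet R Y ∧
      eulerResidual (deriv u) pr β R Y (w', c w') = 0 := fun w hw =>
    eventually_of_mem (Ioi_mem_nhds hw) fun w' hw' =>
      ⟨mk_mem_feasibleSet hR (hc w' hw').1 (hc w' hw').2, sub_eq_zero.mpr (hEuler w' hw')⟩
  have hcd : ∀ w > 0, ContDiffAt ℝ 1 c w := fun w hw =>
    contDiffAt_of_eulerResidual_eq_zero hu' hu'' hpr₀ hβ₀ (fun n => (hR n).le) (hsol w hw)
  refine ⟨fun w hw => (hcd w hw).contDiffWithinAt, fun w hw => ?_⟩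
  have hfeas := (hsol w hw).self_of_nhds.1
  have hderiv := hasDerivAt_of_eulerResidual_eq_zero (hu'.differentiableOn one_ne_zero)
    (deriv_add_continuationCurvature_neg hu'' hpr₀ hβ₀ hfeas).ne
    ((hcd w hw).differentiableAt one_ne_zero) (hsol w hw)
  have hmpc := neg_div_neg_sub_mem_Ioo (hu'' _ hfeas.1)
    (continuationCurvature_neg hu'' hpr hβ hR hfeas)
  rw [← hderiv.deriv] at hmpc
  exact ⟨hderiv.deriv, hmpc, ((hasDerivAt_id' w).sub hderiv.differentiableAt.hasDerivAt).deriv,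
    ⟨by linarith [hmpc.2], by linarith [hmpc.1]⟩⟩

/-- the consumption function defined implicitly by the Euler equation is C¹
with derivative given by the implicit-function-theorem formula, lying in (0,1); the
saving function has derivative 1 - c'(w) ∈ (0,1). -/
theorem consumption_C1_mpc (u : ℝ → ℝ)
    (hu : ContDiffOn ℝ 2 u (Set.Ioi 0))
    (hu' : ∀ x > (0:ℝ), 0 < deriv u x)
    (hu'' : ∀ x > (0:ℝ), deriv (deriv u) x < 0)
    (hInada : Filter.Tendsto (deriv u) (nhdsWithin 0 (Set.Ioi 0)) Filter.atTop)
    (N : ℕ) (hN : 0 < N)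
    (pr β R Y : Fin N → ℝ)
    (hpr : ∀ n, 0 < pr n) (hβ : ∀ n, 0 < β n) (hR : ∀ n, 0 < R n) (hY : ∀ n, 0 < Y n)
    (c : ℝ → ℝ)
    (hc : ∀ w > (0:ℝ), 0 < c w ∧ c w < w + ⨅ n, Y n / R n)
    (hEuler : ∀ w > (0:ℝ),
      deriv u (c w) = ∑ n, pr n * β n * R n * deriv u (R n * (w - c w) + Y n)) :
    ContDiffOn ℝ 1 c (Set.Ioi 0) ∧
    ∀ w > (0:ℝ),
      deriv c w =
        (-∑ n, pr n * β n * (R n)^2 * deriv (deriv u) (R n * (w - c w) + Y n)) /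
        (-deriv (deriv u) (c w)
          - ∑ n, pr n * β n * (R n)^2 * deriv (deriv u) (R n * (w - c w) + Y n)) ∧
      deriv c w ∈ Set.Ioo (0:ℝ) 1 ∧
      deriv (fun w => w - c w) w = 1 - deriv c w ∧
      (1 - deriv c w) ∈ Set.Ioo (0:ℝ) 1 :=
  consumption_C1_mpc_general u hu hu'' N hN pr β R Y hpr hβ hR c hc hEuler
end

section
/- Let c : (0,∞) → ℝ be a function, s(w) = w − c(w), suppose s is a bijection from (0,∞) onto an interval S ⊆ ℝ with strictly increasing inverse, and let g : S → ℝ be a strictly increasing function satisfying g(s(w)) = c(w) for all w > 0. If c is concave on (0,∞), then g is concave on S. -/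
/-- Lemma 2: if the consumption function is concave, then so is the map `g`
from savings to consumption characterized by `g (s w) = c w`. -/
theorem g_concave_of_c_concave (c : ℝ → ℝ) (S : Set ℝ) (hS : Convex ℝ S)
    (hmono : StrictMonoOn (fun w => w - c w) (Set.Ioi 0))
    (hbij : Set.BijOn (fun w => w - c w) (Set.Ioi 0) S)
    (g : ℝ → ℝ) (hg : StrictMonoOn g S)
    (hgc : ∀ w > (0:ℝ), g (w - c w) = c w)
    (hconc : ConcaveOn ℝ (Set.Ioi 0) c) :
    ConcaveOn ℝ S g := by
  refine ⟨hS, ?_⟩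
  intro s₁ hs₁ s₂ hs₂ a b ha hb hab
  obtain ⟨w₁, hw₁, hsw₁⟩ := hbij.surjOn hs₁
  obtain ⟨w₂, hw₂, hsw₂⟩ := hbij.surjOn hs₂
  simp only at hsw₁ hsw₂
  have hw₁' : (0:ℝ) < w₁ := hw₁
  have hw₂' : (0:ℝ) < w₂ := hw₂
  have hwbar : a * w₁ + b * w₂ ∈ Set.Ioi (0:ℝ) := hconc.1 hw₁ hw₂ ha hb hab
  have hcbar : a * c w₁ + b * c w₂ ≤ c (a * w₁ + b * w₂) := hconc.2 hw₁ hw₂ ha hb hab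
  -- a•s₁ + b•s₂ = (a w₁ + b w₂) - (a c w₁ + b c w₂)
  have hkey : a • s₁ + b • s₂ = (a * w₁ + b * w₂) - (a * c w₁ + b * c w₂) := by
    rw [← hsw₁, ← hsw₂]; simp [smul_eq_mul]; ring
  have hmemS : a • s₁ + b • s₂ ∈ S := hS hs₁ hs₂ ha hb hab
  have hmemS' : (a * w₁ + b * w₂) - c (a * w₁ + b * w₂) ∈ S := hbij.mapsTo hwbar
  have hle : (a * w₁ + b * w₂) - c (a * w₁ + b * w₂) ≤ a • s₁ + b • s₂ := by
    rw [hkey]; linarith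
  have := hg.monotoneOn hmemS' hmemS hle
  rw [hgc _ hwbar] at this
  calc a • g s₁ + b • g s₂ = a * c w₁ + b * c w₂ := by
        rw [← hsw₁, ← hsw₂, hgc w₁ hw₁', hgc w₂ hw₂']; simp [smul_eq_mul]
    _ ≤ c (a * w₁ + b * w₂) := hcbar
    _ ≤ g (a • s₁ + b • s₂) := this
end

section
/- Let Φ : (0,∞) → (0,∞) be a function satisfying Φ(Σ_{n=1}^N p_n y_n) ≥ Σ_{n=1}^N p_n Φ(y_n) for every N ≥ 1, every y ∈ (0,∞)^N, and every p ∈ (0,∞)^N (with no constraint that the p_n sum to one). Then there exists k > 0 such that Φ(y) = k y for all y > 0. -/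
/-- a positive function on (0,∞) superadditive with respect to arbitrary
positive weightings is linear. -/
theorem superadditive_linear (Φ : ℝ → ℝ)
    (hpos : ∀ y > (0:ℝ), 0 < Φ y)
    (hineq : ∀ (N : ℕ), 0 < N → ∀ y p : Fin N → ℝ,
      (∀ n, 0 < y n) → (∀ n, 0 < p n) →
      ∑ n, p n * Φ (y n) ≤ Φ (∑ n, p n * y n)) :
    ∃ k > (0:ℝ), ∀ y > (0:ℝ), Φ y = k * y := by
  have key : ∀ x > (0:ℝ), ∀ y > (0:ℝ), Φ x / x ≤ Φ y / y := by
    intro x hx y hy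
    have h := hineq 2 (by norm_num) ![x, y] ![y / (2 * x), 1 / 2]
      (by intro n; fin_cases n <;> simp [hx, hy])
      (by intro n; fin_cases n <;> simp <;> positivity)
    simp [Fin.sum_univ_two] at h
    have hs : y / (2 * x) * x + 2⁻¹ * y = y := by field_simp; ring
    rw [hs] at h
    rw [div_le_div_iff₀ hx hy]
    nlinarith [hpos x hx, hpos y hy]
  refine ⟨Φ 1, hpos 1 one_pos, fun y hy => ?_⟩
  have h1 := key 1 one_pos y hy
  have h2 := key y hy 1 one_pos
  have : Φ y / y = Φ 1 / 1 := le_antisymm h2 h1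
  field_simp at this
  linarith
end

section
/- Let I ⊆ ℝ be an open interval and φ : I → (0,∞) twice differentiable with φ' < 0 and φ'' > 0 on I. Suppose that for all x ∈ I, the quantity φ'(x)²/φ''(x) equals k·φ(x) for a constant k > 0. Then setting a = 1/k − 1 > −1, there exists b ∈ ℝ with a x + b > 0 on I and φ'(x)/φ(x) = −1/(a x + b) for all x ∈ I. -/
/-!
Differentiating `-φ / φ'` gives `φ φ'' / φ'² - 1`, which the ODE turns into the constant
`1/k - 1`. Hence `-φ / φ'` is affine on the convex set `I`, and it is positive there because
`φ > 0 > φ'`.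
-/

theorem Convex.exists_eq_smul_add_of_hasDerivWithinAt {𝕜 G : Type*} [RCLike 𝕜]
    [NormedAddCommGroup G] [NormedSpace 𝕜 G] {f : 𝕜 → G} {s : Set 𝕜} {c : G}
    (hs : Convex ℝ s) (hf : ∀ x ∈ s, HasDerivWithinAt f c s x) :
    ∃ b : G, ∀ x ∈ s, f x = x • c + b := by
  rcases s.eq_empty_or_nonempty with rfl | ⟨x₀, hx₀⟩
  · exact ⟨0, by simp⟩
  refine ⟨f x₀ - x₀ • c, fun x hx => ?_⟩
  have hg : ∀ y ∈ s, HasDerivWithinAt (fun y => f y - y • c) (0 : G) s y := fun y hy =>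
    ((hf y hy).sub ((hasDerivWithinAt_id y s).smul_const c)).congr_deriv (by simp)
  have hconst := hs.norm_image_sub_le_of_norm_hasDerivWithin_le hg (fun _ _ => norm_zero.le) hx₀ hx
  rw [zero_mul, norm_le_zero_iff, sub_eq_zero] at hconst
  rw [← hconst]
  abel

theorem hasDerivAt_neg_div_deriv {f : ℝ → ℝ} {x : ℝ} (hf : DifferentiableAt ℝ f x)
    (hf' : DifferentiableAt ℝ (deriv f) x) (h : deriv f x ≠ 0) :
    HasDerivAt (fun y => -f y / deriv f y) (f x * deriv (deriv f) x / deriv f x ^ 2 - 1) x :=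
  (hf.hasDerivAt.neg.div hf'.hasDerivAt h).congr_deriv <| by
    field_simp
    simp only [Pi.neg_apply]
    ring

theorem ode_step_general (I : Set ℝ) (hIc : Convex ℝ I)
    (φ : ℝ → ℝ)
    (hpos : ∀ x ∈ I, 0 < φ x)
    (hdiff : ∀ x ∈ I, DifferentiableAt ℝ φ x ∧ DifferentiableAt ℝ (deriv φ) x)
    (hd1 : ∀ x ∈ I, deriv φ x < 0)
    (hd2 : ∀ x ∈ I, 0 < deriv (deriv φ) x)
    (k : ℝ)
    (hode : ∀ x ∈ I, (deriv φ x)^2 / deriv (deriv φ) x = k * φ x) :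
    ∃ b : ℝ, (∀ x ∈ I, 0 < (1/k - 1) * x + b) ∧
      ∀ x ∈ I, deriv φ x / φ x = -1 / ((1/k - 1) * x + b) := by
  have hslope : ∀ x ∈ I, φ x * deriv (deriv φ) x / deriv φ x ^ 2 = 1 / k := fun x hx => by
    have hsq : deriv φ x ^ 2 = k * φ x * deriv (deriv φ) x := by
      rw [← hode x hx, div_mul_cancel₀ _ (hd2 x hx).ne']
    rw [hsq]
    field_simp [(hd2 x hx).ne', (hpos x hx).ne']
  have hderiv : ∀ x ∈ I, HasDerivWithinAt (fun y => -φ y / deriv φ y) (1 / k - 1) I x :=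
    fun x hx => by
      simpa [hslope x hx] using
        (hasDerivAt_neg_div_deriv (hdiff x hx).1 (hdiff x hx).2 (hd1 x hx).ne).hasDerivWithinAt
  obtain ⟨b, hb⟩ := hIc.exists_eq_smul_add_of_hasDerivWithinAt hderiv
  have hb' : ∀ x ∈ I, -φ x / deriv φ x = (1 / k - 1) * x + b := fun x hx => by
    rw [hb x hx, smul_eq_mul, mul_comm]
  refine ⟨b, fun x hx => ?_, fun x hx => ?_⟩
  · rw [← hb' x hx]
    exact div_pos_of_neg_of_neg (neg_neg_of_pos (hpos x hx)) (hd1 x hx)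
  · rw [← hb' x hx]
    field_simp [(hd1 x hx).ne, (hpos x hx).ne']

/-- the ODE step: φ'²/φ'' = k·φ forces φ'/φ = −1/(ax+b) with a = 1/k − 1. -/
theorem ode_step (I : Set ℝ) (hIo : IsOpen I) (hIc : Convex ℝ I)
    (φ : ℝ → ℝ)
    (hpos : ∀ x ∈ I, 0 < φ x)
    (hdiff : ∀ x ∈ I, DifferentiableAt ℝ φ x ∧ DifferentiableAt ℝ (deriv φ) x)
    (hd1 : ∀ x ∈ I, deriv φ x < 0)
    (hd2 : ∀ x ∈ I, 0 < deriv (deriv φ) x)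
    (k : ℝ) (hk : 0 < k)
    (hode : ∀ x ∈ I, (deriv φ x)^2 / deriv (deriv φ) x = k * φ x) :
    ∃ b : ℝ, (∀ x ∈ I, 0 < (1/k - 1) * x + b) ∧
      ∀ x ∈ I, deriv φ x / φ x = -1 / ((1/k - 1) * x + b) :=
  ode_step_general I hIc φ hpos hdiff hd1 hd2 k hode
end

section
/- Let φ(x) = c·x^{−1/a} on I = (0,∞) with a > 0, c > 0. Then for every N ≥ 1, p, v ∈ (0,∞)^N, x ∈ (0,∞)^N, the function g(s) = φ⁻¹(Σ_n p_n φ(x_n + v_n s)), defined for s in a neighborhood of 0 with x_n + v_n s > 0 for all n, is concave in s. -/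
/-!
With `q = -1/a < 0`, the power sum `S y = ∑ pₙ yₙ ^ q` is convex on the positive orthant (each
`t ↦ t ^ q` is) and homogeneous of degree `q`. Hence `F = S ^ q⁻¹` is homogeneous of degree one
with convex superlevel set `{F ≥ 1} = {S ≤ 1}`, and such a function is concave: writing
`t₁ y + t₂ z = D • (α • y / F y + β • z / F z)` with `D = t₁ F y + t₂ F z` and `α + β = 1` gives
`F (t₁ y + t₂ z) ≥ D`. After the constant `c` cancels, the CRRA composite is `F` along the line
`s ↦ x + s v`.
-/

open Finset Real Set

theorem convexOn_rpow_of_nonpos {q : ℝ} (hq : q ≤ 0) : ConvexOn ℝ (Ioi 0) fun x : ℝ ↦ x ^ q := by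
  refine ⟨convex_Ioi 0, fun x hx y hy a b ha hb hab => ?_⟩
  simp only [Set.mem_Ioi] at hx hy
  simp only [smul_eq_mul]
  -- weighted AM-GM twice, the first one reversed by the antitone map `t ↦ t ^ q`
  calc (a * x + b * y) ^ q ≤ (x ^ a * y ^ b) ^ q :=
        rpow_le_rpow_of_nonpos (by positivity)
          (geom_mean_le_arith_mean2_weighted ha hb hx.le hy.le hab) hq
    _ = (x ^ q) ^ a * (y ^ q) ^ b := by
        rw [mul_rpow (by positivity) (by positivity), ← rpow_mul hx.le, ← rpow_mul hy.le,
          ← rpow_mul hx.le, ← rpow_mul hy.le, mul_comm a, mul_comm b]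
    _ ≤ a * x ^ q + b * y ^ q :=
        geom_mean_le_arith_mean2_weighted ha hb (by positivity) (by positivity) hab

theorem ConvexOn.sum_mul_apply {ι : Type*} [Fintype ι] {s : Set ℝ} {f : ℝ → ℝ} {p : ι → ℝ}
    (hf : ConvexOn ℝ s f) (hp : ∀ i, 0 ≤ p i) :
    ConvexOn ℝ (univ.pi fun _ => s) fun y => ∑ i, p i * f (y i) := by
  refine ⟨convex_pi fun _ _ => hf.1, fun y hy z hz a b ha hb hab => ?_⟩
  simp only [mem_univ_pi] at hy hz
  calc ∑ i, p i * f ((a • y + b • z) i) ≤ ∑ i, p i * (a * f (y i) + b * f (z i)) :=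
        sum_le_sum fun i _ => mul_le_mul_of_nonneg_left (hf.2 (hy i) (hz i) ha hb hab) (hp i)
    _ = a • ∑ i, p i * f (y i) + b • ∑ i, p i * f (z i) := by
        simp only [smul_eq_mul, mul_sum, ← sum_add_distrib]
        exact sum_congr rfl fun i _ => by ring

theorem ConvexOn.concaveOn_rpow_inv_of_homogeneous {E : Type*} [AddCommGroup E] [Module ℝ E]
    {C : Set E} {S : E → ℝ} {q : ℝ} (hq : q < 0) (hS : ConvexOn ℝ C S)
    (hC : ∀ y ∈ C, ∀ k : ℝ, 0 < k → k • y ∈ C) (hpos : ∀ y ∈ C, 0 < S y)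
    (hhom : ∀ y ∈ C, ∀ k : ℝ, 0 < k → S (k • y) = k ^ q * S y) :
    ConcaveOn ℝ C fun y => S y ^ q⁻¹ := by
  refine ⟨hS.1, fun y hy z hz t₁ t₂ ht₁ ht₂ ht => ?_⟩
  set A := S y ^ q⁻¹
  set B := S z ^ q⁻¹
  set D := t₁ * A + t₂ * B
  have hA : 0 < A := rpow_pos_of_pos (hpos y hy) _
  have hB : 0 < B := rpow_pos_of_pos (hpos z hz) _
  have hD : 0 < D := convex_Ioi (0 : ℝ) hA hB ht₁ ht₂ ht
  -- rescale `y` and `z` onto the level set `S = 1`, where convexity of `S` applies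
  have hnormalize : ∀ u ∈ C, S ((S u ^ q⁻¹)⁻¹ • u) = 1 := fun u hu => by
    have hU : 0 < S u ^ q⁻¹ := rpow_pos_of_pos (hpos u hu) _
    rw [hhom u hu _ (inv_pos.2 hU), inv_rpow hU.le, rpow_inv_rpow (hpos u hu).le hq.ne,
      inv_mul_cancel₀ (hpos u hu).ne']
  set α := t₁ * A / D
  set β := t₂ * B / D
  have hαβ : α + β = 1 := by rw [← add_div, div_self hD.ne']
  set w := α • A⁻¹ • y + β • B⁻¹ • z
  have hw : w ∈ C := hS.1 (hC y hy _ (inv_pos.2 hA)) (hC z hz _ (inv_pos.2 hB)) (by positivity)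
    (by positivity) hαβ
  have hSw : S w ≤ 1 := by
    calc S w ≤ α • S (A⁻¹ • y) + β • S (B⁻¹ • z) :=
          hS.2 (hC y hy _ (inv_pos.2 hA)) (hC z hz _ (inv_pos.2 hB)) (by positivity)
            (by positivity) hαβ
      _ = 1 := by rw [hnormalize y hy, hnormalize z hz, smul_eq_mul, smul_eq_mul, mul_one,
          mul_one, hαβ]
  have hcomb : t₁ • y + t₂ • z = D • w := by
    simp only [w, α, β, smul_add, smul_smul]
    congr 2 <;> field_simp
  have hle : S (t₁ • y + t₂ • z) ≤ D ^ q := by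
    rw [hcomb, hhom w hw D hD]
    exact mul_le_of_le_one_right (rpow_pos_of_pos hD q).le hSw
  calc t₁ • A + t₂ • B = (D ^ q) ^ q⁻¹ := (rpow_rpow_inv hD.le hq.ne).symm
    _ ≤ S (t₁ • y + t₂ • z) ^ q⁻¹ :=
        rpow_le_rpow_of_nonpos (hpos _ (hS.1 hy hz ht₁ ht₂ ht)) hle (inv_nonpos.2 hq.le)

noncomputable def powerMean {ι : Type*} [Fintype ι] (p : ι → ℝ) (q : ℝ) (y : ι → ℝ) : ℝ :=
  (∑ i, p i * y i ^ q) ^ q⁻¹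

theorem concaveOn_powerMean {ι : Type*} [Fintype ι] [Nonempty ι] {p : ι → ℝ} {q : ℝ}
    (hp : ∀ i, 0 < p i) (hq : q < 0) :
    ConcaveOn ℝ (univ.pi fun _ => Ioi 0) (powerMean p q) := by
  refine ((convexOn_rpow_of_nonpos hq.le).sum_mul_apply fun i => (hp i).le
    ).concaveOn_rpow_inv_of_homogeneous hq ?_ ?_ ?_
  · intro y hy k hk
    simp only [mem_univ_pi, Set.mem_Ioi, Pi.smul_apply, smul_eq_mul] at hy ⊢
    exact fun i => mul_pos hk (hy i)
  · intro y hy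
    simp only [mem_univ_pi, Set.mem_Ioi] at hy
    exact sum_pos (fun i _ => mul_pos (hp i) (rpow_pos_of_pos (hy i) q)) univ_nonempty
  · intro y hy k hk
    simp only [mem_univ_pi, Set.mem_Ioi] at hy
    simp only [Pi.smul_apply, smul_eq_mul, mul_sum]
    exact sum_congr rfl fun i _ => by rw [mul_rpow hk.le (hy i).le]; ring

theorem crra_g_concave_general (a c : ℝ) (ha : 0 < a) (hc : 0 < c)
    (N : ℕ) (hN : 0 < N) (p v x : Fin N → ℝ)
    (hp : ∀ n, 0 < p n) :
    ConcaveOn ℝ {s : ℝ | ∀ n, 0 < x n + v n * s}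
      (fun s => ((∑ n, p n * (c * (x n + v n * s) ^ (-1/a))) / c) ^ (-a)) := by
  have : Nonempty (Fin N) := Fin.pos_iff_nonempty.1 hN
  have hline : ∀ s n, AffineMap.lineMap x (x + v) s n = x n + v n * s := fun s n => by
    simp [AffineMap.lineMap_apply]; ring
  have hset : {s : ℝ | ∀ n, 0 < x n + v n * s}
      = AffineMap.lineMap x (x + v) ⁻¹' univ.pi fun _ => Ioi 0 := by
    ext s; simp [hline]
  have hfun : (fun s => ((∑ n, p n * (c * (x n + v n * s) ^ (-1/a))) / c) ^ (-a))
      = powerMean p (-1/a) ∘ AffineMap.lineMap x (x + v) := by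
    ext s
    simp only [Function.comp_apply, powerMean, hline, inv_div, div_neg, div_one]
    congr 1
    simp_rw [mul_left_comm _ c, ← mul_sum, mul_div_cancel_left₀ _ hc.ne']
  rw [hset, hfun]
  exact (concaveOn_powerMean hp (by simpa [neg_div] using ha)).comp_affineMap _

/-- concavity of the quasi-arithmetic composite for CRRA marginal utility
φ(x) = c·x^(−1/a), a > 0. -/
theorem crra_g_concave (a c : ℝ) (ha : 0 < a) (hc : 0 < c)
    (N : ℕ) (hN : 0 < N) (p v x : Fin N → ℝ)
    (hp : ∀ n, 0 < p n) (hv : ∀ n, 0 < v n) (hx : ∀ n, 0 < x n) :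
    ConcaveOn ℝ {s : ℝ | ∀ n, 0 < x n + v n * s}
      (fun s => ((∑ n, p n * (c * (x n + v n * s) ^ (-1/a))) / c) ^ (-a)) :=
  crra_g_concave_general a c ha hc N hN p v x hp
end

section
/- Let u : (0,∞) → ℝ be twice continuously differentiable with u' > 0, u'' < 0, u'(0⁺) = ∞, and suppose for some finite-state specification (π_n, β_n, R_n, Y_n) with all entries positive, the saving function s(w) = w − c(w) (with c the solution of the Euler equation) satisfies s(w) > 0 for all w > 0. Then u'(w) < Σ_n π_n β_n R_n u'(Y_n) for all w > 0, contradicting u'(0⁺) = ∞; hence it is impossible that s(w) > 0 for all w. -/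
/-- always-positive saving is impossible under the Inada condition at 0. -/
theorem saving_not_always_positive (u : ℝ → ℝ)
    (hu : ContDiffOn ℝ 2 u (Set.Ioi 0))
    (hu' : ∀ x > (0:ℝ), 0 < deriv u x)
    (hu'' : ∀ x > (0:ℝ), deriv (deriv u) x < 0)
    (hInada : Filter.Tendsto (deriv u) (nhdsWithin 0 (Set.Ioi 0)) Filter.atTop)
    (N : ℕ) (hN : 0 < N)
    (pr β R Y : Fin N → ℝ)
    (hpr : ∀ n, 0 < pr n) (hβ : ∀ n, 0 < β n) (hR : ∀ n, 0 < R n) (hY : ∀ n, 0 < Y n)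
    (c : ℝ → ℝ)
    (hcpos : ∀ w > (0:ℝ), 0 < c w)
    (hEuler : ∀ w > (0:ℝ),
      deriv u (c w) = ∑ n, pr n * β n * R n * deriv u (R n * (w - c w) + Y n))
    (hspos : ∀ w > (0:ℝ), 0 < w - c w) :
    (∀ w > (0:ℝ), deriv u w < ∑ n, pr n * β n * R n * deriv u (Y n)) ∧ False := by
  have hcont : ContinuousOn (deriv u) (Set.Ioi 0) :=
    hu.continuousOn_deriv_of_isOpen isOpen_Ioi (by norm_num)
  have hanti : StrictAntiOn (deriv u) (Set.Ioi 0) := by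
    apply strictAntiOn_of_deriv_neg (convex_Ioi 0) hcont
    intro x hx
    rw [interior_Ioi] at hx
    exact hu'' x hx
  have key : ∀ w > (0:ℝ), deriv u w < ∑ n, pr n * β n * R n * deriv u (Y n) := by
    intro w hw
    have hc := hcpos w hw
    have hs := hspos w hw
    have h1 : deriv u w < deriv u (c w) :=
      hanti (Set.mem_Ioi.mpr hc) (Set.mem_Ioi.mpr hw) (by linarith)
    have h2 : deriv u (c w) < ∑ n, pr n * β n * R n * deriv u (Y n) := by
      rw [hEuler w hw]
      have : Nonempty (Fin N) := Fin.pos_iff_nonempty.mp hN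
      apply Finset.sum_lt_sum_of_nonempty Finset.univ_nonempty
      intro n _
      have hRn := hR n
      have hlt : Y n < R n * (w - c w) + Y n := by nlinarith
      have hu'lt : deriv u (R n * (w - c w) + Y n) < deriv u (Y n) :=
        hanti (Set.mem_Ioi.mpr (hY n))
          (Set.mem_Ioi.mpr (by nlinarith [hY n])) hlt
      have hpos : 0 < pr n * β n * R n := mul_pos (mul_pos (hpr n) (hβ n)) (hR n)
      nlinarith
    linarith
  refine ⟨key, ?_⟩
  have hev := hInada.eventually_ge_atTop ((∑ n, pr n * β n * R n * deriv u (Y n)) + 1)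
  have hne : (nhdsWithin (0:ℝ) (Set.Ioi 0)).NeBot := nhdsGT_neBot 0
  obtain ⟨x, hge, hx⟩ := (hev.and self_mem_nhdsWithin).exists
  have := key x (Set.mem_Ioi.mp hx)
  linarith
end

section
/- Let u : (0,∞) → ℝ be twice continuously differentiable with u' > 0, u'' < 0, u'(x) → 0 as x → ∞, and suppose for some finite-state specification (π_n, β_n, R_n, Y_n) with all entries positive, the saving function s(w) = w − c(w) satisfies s(w) < 0 for all w > 0. Then u'(w) > Σ_n π_n β_n R_n u'(Y_n) > 0 for all w > 0, contradicting u'(∞) = 0; hence it is impossible that s(w) < 0 for all w. -/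
/-- always-negative saving is impossible given u'(∞) = 0. -/
theorem saving_not_always_negative (u : ℝ → ℝ)
    (hu : ContDiffOn ℝ 2 u (Set.Ioi 0))
    (hu' : ∀ x > (0:ℝ), 0 < deriv u x)
    (hu'' : ∀ x > (0:ℝ), deriv (deriv u) x < 0)
    (hlim : Filter.Tendsto (deriv u) Filter.atTop (nhds 0))
    (N : ℕ) (hN : 0 < N)
    (pr β R Y : Fin N → ℝ)
    (hpr : ∀ n, 0 < pr n) (hβ : ∀ n, 0 < β n) (hR : ∀ n, 0 < R n) (hY : ∀ n, 0 < Y n)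
    (c : ℝ → ℝ)
    (hcpos : ∀ w > (0:ℝ), 0 < c w)
    (hfeas : ∀ w > (0:ℝ), ∀ n, 0 < R n * (w - c w) + Y n)
    (hEuler : ∀ w > (0:ℝ),
      deriv u (c w) = ∑ n, pr n * β n * R n * deriv u (R n * (w - c w) + Y n))
    (hsneg : ∀ w > (0:ℝ), w - c w < 0) :
    (∀ w > (0:ℝ), ∑ n, pr n * β n * R n * deriv u (Y n) < deriv u w) ∧ False := by
  have hopen : IsOpen (Set.Ioi (0:ℝ)) := isOpen_Ioi
  have hd1 : ContDiffOn ℝ 1 (deriv u) (Set.Ioi 0) := by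
    have := ContDiffOn.deriv_of_isOpen (m := 1) hu hopen (by norm_num : (1:WithTop ℕ∞)+1 ≤ 2)
    simpa using this
  have hcont : ContinuousOn (deriv u) (Set.Ioi 0) := hd1.continuousOn
  have hdiff : ∀ x ∈ interior (Set.Ioi (0:ℝ)),
      HasDerivAt (deriv u) (deriv (deriv u) x) x := by
    intro x hx
    rw [hopen.interior_eq] at hx
    have : DifferentiableOn ℝ (deriv u) (Set.Ioi 0) :=
      hd1.differentiableOn (by norm_num)
    exact ((this x hx).differentiableAt (hopen.mem_nhds hx)).hasDerivAt
  have hanti : StrictAntiOn (deriv u) (Set.Ioi 0) := by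
    apply strictAntiOn_of_hasDerivWithinAt_neg (convex_Ioi 0) hcont
      (fun x hx => ((hdiff x hx).hasDerivWithinAt))
    intro x hx
    rw [hopen.interior_eq] at hx
    exact hu'' x hx
  have key : ∀ w > (0:ℝ), ∑ n, pr n * β n * R n * deriv u (Y n) < deriv u w := by
    intro w hw
    have hcw : c w > 0 := hcpos w hw
    have hwc : w < c w := by linarith [hsneg w hw]
    have h1 : deriv u (c w) < deriv u w := hanti hw hcw hwc
    have h2 : ∑ n, pr n * β n * R n * deriv u (Y n)
        < ∑ n, pr n * β n * R n * deriv u (R n * (w - c w) + Y n) := by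
      apply Finset.sum_lt_sum_of_nonempty
      · exact Finset.univ_nonempty_iff.mpr ⟨⟨0, hN⟩⟩
      · intro n _
        have hlt : R n * (w - c w) + Y n < Y n := by
          nlinarith [hsneg w hw, hR n]
        have := hanti (hfeas w hw n) (hY n) hlt
        have hc : 0 < pr n * β n * R n := mul_pos (mul_pos (hpr n) (hβ n)) (hR n)
        exact (mul_lt_mul_iff_right₀ hc).mpr this
    rw [← hEuler w hw] at h2
    linarith
  refine ⟨key, ?_⟩
  set K := ∑ n, pr n * β n * R n * deriv u (Y n) with hK
  have hKpos : 0 < K := by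
    apply Finset.sum_pos
    · intro n _
      exact mul_pos (mul_pos (mul_pos (hpr n) (hβ n)) (hR n)) (hu' (Y n) (hY n))
    · exact Finset.univ_nonempty_iff.mpr ⟨⟨0, hN⟩⟩
  have : ∀ᶠ w in Filter.atTop, deriv u w < K := by
    have := hlim (Iio_mem_nhds hKpos)
    filter_upwards [this] with w hw using hw
  obtain ⟨w, hw1, hw2⟩ := (this.and (Filter.eventually_ge_atTop 1)).exists
  exact absurd hw1 (not_lt.mpr (key w (by linarith)).le)
end

section
/- Let I ⊆ ℝ be an open interval, φ : I → ℝ twice differentiable with φ(I) = (0,∞), φ' < 0, and φ'' > 0 on I. Suppose that for all N ≥ 1, all p, v ∈ (0,∞)^N and x ∈ I^N, the function g(s) = φ⁻¹(Σ_n p_n φ(x_n + v_n s)) is concave on its domain (a neighborhood of 0). Then there exist a > −1, b ∈ ℝ, and c > 0 with I = {x : a x + b > 0} such that φ(x) = c(ax+b)^{−1/a} if a ≠ 0, and φ(x) = c e^{−x/b} (with b > 0, I = ℝ) if a = 0. -/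
/-!
Take a single summand with weight `p = φ u / φ x`: the concave function
`w s = φ⁻¹ (p * φ (x + s))` passes through `u` at `s = 0`, and `w'' 0 ≤ 0` unwinds to
`φ u * φ'' u / φ' u ^ 2 ≤ φ x * φ'' x / φ' x ^ 2`. By symmetry in `x` and `u` the ratio
`φ * φ'' / φ' ^ 2` is a constant `a + 1 > 0`, hence `(φ / φ')' = -a` and
`φ = -(a * x + b) * φ'`.
This linear equation integrates to the power law (`a ≠ 0`) or the exponential law (`a = 0`), and
since the model function is injective on the half-line `{x | 0 < a * x + b}` and already maps `I`
onto `(0, ∞)`, `I` is that whole half-line.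
-/

open Set Filter Topology

theorem ConcaveOn.nonpos_of_hasDerivAt_deriv {f f' : ℝ → ℝ} {U : Set ℝ} {x d : ℝ}
    (hU : U ∈ 𝓝 x) (hf : ConcaveOn ℝ U f) (hf' : ∀ y ∈ U, HasDerivAt f (f' y) y)
    (hd : HasDerivAt f' d x) : d ≤ 0 := by
  have hanti : AntitoneOn f' U := fun y hy z hz hyz => by
    simpa only [(hf' y hy).deriv, (hf' z hz).deriv] using
      hf.antitoneOn_deriv (fun y hy => (hf' y hy).differentiableAt) hy hz hyz
  refine hd.hasDerivWithinAt.nonpos_of_antitoneOn ?_ hanti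
  rw [AccPt, inf_of_le_left (le_principal_iff.2 (mem_nhdsWithin_of_mem_nhds hU))]
  infer_instance

theorem IsOpen.exists_eq_of_hasDerivAt_zero {I : Set ℝ} {f : ℝ → ℝ} (hIo : IsOpen I)
    (hIc : IsPreconnected I) (hf : ∀ z ∈ I, HasDerivAt f 0 z) : ∃ c, ∀ z ∈ I, f z = c :=
  hIo.exists_is_const_of_deriv_eq_zero hIc
    (fun z hz => (hf z hz).differentiableAt.differentiableWithinAt) (fun z hz => (hf z hz).deriv)

theorem Set.eq_of_image_eq_of_injOn {α β : Type*} {f g : α → β} {s t : Set α} {u : Set β}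
    (hf : f '' s = u) (hst : s ⊆ t) (hfg : EqOn f g s) (hg : InjOn g t) (hgt : MapsTo g t u) :
    s = t := by
  refine hst.antisymm ((hg.image_subset_image_iff subset_rfl hst).1 ?_)
  rw [← hfg.image_eq, hf]
  exact hgt.image_subset

section

variable {I : Set ℝ} {φ ψ φ' φ'' : ℝ → ℝ}

theorem Set.LeftInvOn.hasDerivAt (hinv : LeftInvOn ψ φ I) (hIo : IsOpen I)
    (hφ : ∀ z ∈ I, HasDerivAt φ (φ' z) z) (hφ' : ∀ z ∈ I, HasDerivAt φ' (φ'' z) z)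
    {z : ℝ} (hz : z ∈ I) (hz' : φ' z ≠ 0) : HasDerivAt ψ (φ' z)⁻¹ (φ z) :=
  ((hasStrictDerivAt_of_hasDerivAt_of_continuousAt
      (eventually_of_mem (hIo.mem_nhds hz) hφ) (hφ' z hz).continuousAt).to_local_left_inverse
    hz' (eventually_of_mem (hIo.mem_nhds hz) fun _ hy => hinv hy)).hasDerivAt

theorem hasDerivAt_leftInv_mul_comp_add (hIo : IsOpen I) (himg : φ '' I = Ioi 0)
    (hinv : LeftInvOn ψ φ I)
    (hφ : ∀ z ∈ I, HasDerivAt φ (φ' z) z) (hφ' : ∀ z ∈ I, HasDerivAt φ' (φ'' z) z)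
    (hd1 : ∀ z ∈ I, φ' z ≠ 0) {p x s : ℝ} (hp : 0 < p) (hxs : x + s ∈ I) :
    HasDerivAt (fun s => ψ (p * φ (x + s)))
      (p * φ' (x + s) / φ' (ψ (p * φ (x + s)))) s := by
  have hmem : p * φ (x + s) ∈ φ '' I :=
    himg ▸ mul_pos hp (himg ▸ mem_image_of_mem φ hxs : φ (x + s) ∈ Ioi 0)
  have hw : ψ (p * φ (x + s)) ∈ I := hinv.mapsTo (surjOn_image φ I) hmem
  have hψ := hinv.hasDerivAt hIo hφ hφ' hw (hd1 _ hw)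
  rw [hinv.rightInvOn_image hmem] at hψ
  have hq : HasDerivAt (fun s => p * φ (x + s)) (p * φ' (x + s)) s :=
    ((hφ _ hxs).comp s ((hasDerivAt_id s).const_add x)).const_mul p |>.congr_deriv (by simp)
  rw [div_eq_inv_mul]
  exact hψ.comp s hq

theorem hasDerivAt_deriv_leftInv_mul_comp_add (hIo : IsOpen I) (himg : φ '' I = Ioi 0)
    (hinv : LeftInvOn ψ φ I)
    (hφ : ∀ z ∈ I, HasDerivAt φ (φ' z) z) (hφ' : ∀ z ∈ I, HasDerivAt φ' (φ'' z) z)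
    (hd1 : ∀ z ∈ I, φ' z ≠ 0) {p x u : ℝ} (hp : 0 < p) (hx : x ∈ I) (hu : u ∈ I)
    (hxu : ψ (p * φ x) = u) :
    HasDerivAt (fun s => p * φ' (x + s) / φ' (ψ (p * φ (x + s))))
      ((p * φ'' x * φ' u - p * φ' x * (φ'' u * (p * φ' x / φ' u))) / φ' u ^ 2) 0 := by
  have hx0 : x + 0 ∈ I := by rwa [add_zero]
  have hnum : HasDerivAt (fun s => p * φ' (x + s)) (p * φ'' x) 0 := by
    have := ((hφ' _ hx0).comp 0 ((hasDerivAt_id 0).const_add x)).const_mul p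
    simpa using this
  have hden : HasDerivAt (fun s => φ' (ψ (p * φ (x + s)))) (φ'' u * (p * φ' x / φ' u)) 0 := by
    have := (hφ' u hu).comp_of_eq 0
      (hasDerivAt_leftInv_mul_comp_add hIo himg hinv hφ hφ' hd1 hp hx0) (by simp [hxu])
    simp only [add_zero, hxu] at this
    exact this
  have := hnum.div hden (by simpa [hxu] using hd1 u hu)
  simp only [add_zero, hxu] at this
  exact this

theorem mul_sq_deriv_le_of_concaveOn (hIo : IsOpen I) (himg : φ '' I = Ioi 0)
    (hinv : LeftInvOn ψ φ I)
    (hφ : ∀ z ∈ I, HasDerivAt φ (φ' z) z) (hφ' : ∀ z ∈ I, HasDerivAt φ' (φ'' z) z)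
    (hd1 : ∀ z ∈ I, φ' z < 0)
    (hconc : ∀ p > 0, ∀ x ∈ I, ConcaveOn ℝ {s | x + s ∈ I} fun s => ψ (p * φ (x + s)))
    {x u : ℝ} (hx : x ∈ I) (hu : u ∈ I) :
    φ u * φ' x ^ 2 * φ'' u ≤ φ x * φ'' x * φ' u ^ 2 := by
  have hφpos : MapsTo φ I (Ioi 0) := himg ▸ mapsTo_image φ I
  have hφx : 0 < φ x := hφpos hx
  have hφu : 0 < φ u := hφpos hu
  have hd1' : ∀ z ∈ I, φ' z ≠ 0 := fun z hz => (hd1 z hz).ne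
  set p := φ u / φ x
  have hp : 0 < p := div_pos hφu hφx
  have hxu : ψ (p * φ x) = u := by rw [div_mul_cancel₀ _ hφx.ne', hinv hu]
  have hU : {s | x + s ∈ I} ∈ 𝓝 (0 : ℝ) :=
    (hIo.preimage (continuous_const_add x)).mem_nhds (by simpa using hx)
  have hw'' := (hconc p hp x hx).nonpos_of_hasDerivAt_deriv hU
    (fun s hs => hasDerivAt_leftInv_mul_comp_add hIo himg hinv hφ hφ' hd1' hp hs)
    (hasDerivAt_deriv_leftInv_mul_comp_add hIo himg hinv hφ hφ' hd1' hp hx hu hxu)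
  have hdu := hd1 u hu
  have hdu0 := hdu.ne
  have hpx : φ u = p * φ x := (div_mul_cancel₀ _ hφx.ne').symm
  have key : φ x * φ'' x * φ' u ^ 2 - p * φ x * φ' x ^ 2 * φ'' u = φ x / p * φ' u ^ 3 *
      ((p * φ'' x * φ' u - p * φ' x * (φ'' u * (p * φ' x / φ' u))) / φ' u ^ 2) := by
    field_simp
  have hdu3 : φ' u ^ 3 < 0 := Odd.pow_neg (by decide) hdu
  rw [← sub_nonneg, hpx, key]
  exact mul_nonneg_of_nonpos_of_nonpos
    (mul_nonpos_of_nonneg_of_nonpos (div_pos hφx hp).le hdu3.le) hw''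

theorem exists_forall_mul_eq_mul_sq (hφ : MapsTo φ I (Ioi 0)) (hd1 : ∀ z ∈ I, φ' z ≠ 0)
    (hd2 : ∀ z ∈ I, 0 < φ'' z) (hne : I.Nonempty)
    (hle : ∀ x ∈ I, ∀ u ∈ I, φ u * φ' x ^ 2 * φ'' u ≤ φ x * φ'' x * φ' u ^ 2) :
    ∃ a > -1, ∀ z ∈ I, φ z * φ'' z = (a + 1) * φ' z ^ 2 := by
  obtain ⟨x₀, hx₀⟩ := hne
  have hφx₀ : 0 < φ x₀ := hφ hx₀
  have hd1x₀ := hd1 x₀ hx₀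
  refine ⟨φ x₀ * φ'' x₀ / φ' x₀ ^ 2 - 1, ?_, fun z hz => ?_⟩
  · have := hd2 x₀ hx₀
    have : 0 < φ x₀ * φ'' x₀ / φ' x₀ ^ 2 := by positivity
    linarith
  · have h₁ := hle x₀ hx₀ z hz
    have h₂ := hle z hz x₀ hx₀
    field_simp
    linarith

theorem exists_forall_eq_neg_mul_of_mul_eq_mul_sq (hIo : IsOpen I) (hIc : IsPreconnected I)
    (hφ : ∀ z ∈ I, HasDerivAt φ (φ' z) z) (hφ' : ∀ z ∈ I, HasDerivAt φ' (φ'' z) z)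
    (hd1 : ∀ z ∈ I, φ' z ≠ 0) {a : ℝ}
    (hode : ∀ z ∈ I, φ z * φ'' z = (a + 1) * φ' z ^ 2) :
    ∃ b, ∀ z ∈ I, φ z = -(a * z + b) * φ' z := by
  obtain ⟨c, hc⟩ := hIo.exists_eq_of_hasDerivAt_zero hIc (f := fun z => φ z / φ' z + a * z)
    fun z hz => ((hφ z hz).div (hφ' z hz) (hd1 z hz)).add ((hasDerivAt_id z).const_mul a)
      |>.congr_deriv (by rw [hode z hz]; field_simp [hd1 z hz]; ring)
  refine ⟨-c, fun z hz => ?_⟩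
  have := hc z hz
  field_simp [hd1 z hz] at this
  linear_combination this

theorem exists_forall_eq_mul_rpow (hIo : IsOpen I) (hIc : IsPreconnected I)
    (hφ : ∀ z ∈ I, HasDerivAt φ (φ' z) z) {a b : ℝ} (ha : a ≠ 0)
    (hab : ∀ z ∈ I, 0 < a * z + b) (h : ∀ z ∈ I, φ z = -(a * z + b) * φ' z) :
    ∃ c, ∀ z ∈ I, φ z = c * (a * z + b) ^ (-1 / a) := by
  obtain ⟨c, hc⟩ := hIo.exists_eq_of_hasDerivAt_zero hIc
    (f := fun z => φ z * (a * z + b) ^ (1 / a)) fun z hz => by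
      have hlin : HasDerivAt (fun z => a * z + b) a z := by
        simpa using ((hasDerivAt_id z).const_mul a).add_const b
      refine ((hφ z hz).mul (hlin.rpow_const (p := 1 / a) (Or.inl (hab z hz).ne'))).congr_deriv ?_
      rw [Real.rpow_sub_one (hab z hz).ne', h z hz]
      field_simp [(hab z hz).ne']
      ring
  refine ⟨c, fun z hz => ?_⟩
  rw [neg_div, Real.rpow_neg (hab z hz).le, ← hc z hz, mul_inv_cancel_right₀]
  exact (Real.rpow_pos_of_pos (hab z hz) _).ne'

theorem exists_forall_eq_mul_exp (hIo : IsOpen I) (hIc : IsPreconnected I)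
    (hφ : ∀ z ∈ I, HasDerivAt φ (φ' z) z) {b : ℝ} (hb : b ≠ 0)
    (h : ∀ z ∈ I, φ z = -b * φ' z) :
    ∃ c, ∀ z ∈ I, φ z = c * Real.exp (-z / b) := by
  obtain ⟨c, hc⟩ := hIo.exists_eq_of_hasDerivAt_zero hIc
    (f := fun z => φ z * Real.exp (z / b)) fun z hz => by
      refine ((hφ z hz).mul ((hasDerivAt_id z).div_const b).exp).congr_deriv ?_
      rw [h z hz]
      field_simp
      ring
  refine ⟨c, fun z hz => ?_⟩
  rw [neg_div, Real.exp_neg, ← hc z hz]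
  exact (mul_inv_cancel_right₀ (Real.exp_pos _).ne' _).symm

theorem pos_of_forall_eq_mul (himg : φ '' I = Ioi 0) {c : ℝ} {g : ℝ → ℝ}
    (hc : ∀ z ∈ I, φ z = c * g z) (hg : ∀ z ∈ I, 0 < g z) : 0 < c := by
  obtain ⟨x₀, hx₀⟩ : I.Nonempty := (himg ▸ nonempty_Ioi : (φ '' I).Nonempty).of_image
  have hφx₀ : φ x₀ ∈ Ioi 0 := himg ▸ mem_image_of_mem φ hx₀
  rw [mem_Ioi, hc x₀ hx₀] at hφx₀
  exact pos_of_mul_pos_left hφx₀ (hg x₀ hx₀).le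

theorem exists_pos_eq_setOf_and_eq_mul_rpow (hIo : IsOpen I) (hIc : IsPreconnected I)
    (himg : φ '' I = Ioi 0) (hφ : ∀ z ∈ I, HasDerivAt φ (φ' z) z) {a b : ℝ} (ha : a ≠ 0)
    (hab : ∀ z ∈ I, 0 < a * z + b) (h : ∀ z ∈ I, φ z = -(a * z + b) * φ' z) :
    ∃ c > 0, I = {x | 0 < a * x + b} ∧ ∀ x ∈ I, φ x = c * (a * x + b) ^ (-1 / a) := by
  obtain ⟨c, hc⟩ := exists_forall_eq_mul_rpow hIo hIc hφ ha hab h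
  have hc0 : 0 < c := pos_of_forall_eq_mul himg hc fun z hz => Real.rpow_pos_of_pos (hab z hz) _
  refine ⟨c, hc0, Set.eq_of_image_eq_of_injOn himg hab hc (fun x hx y hy hxy => ?_)
    (fun x hx => mul_pos hc0 (Real.rpow_pos_of_pos hx _)), hc⟩
  have hexp : -1 / a ≠ 0 := div_ne_zero (by norm_num) ha
  have hx' : 0 ≤ a * x + b := le_of_lt hx
  have hy' : 0 ≤ a * y + b := le_of_lt hy
  exact mul_left_cancel₀ ha <| add_right_cancel <|
    Real.rpow_left_injOn hexp hx' hy' (mul_left_cancel₀ hc0.ne' hxy)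

theorem exists_pos_eq_univ_and_eq_mul_exp (hIo : IsOpen I) (hIc : IsPreconnected I)
    (himg : φ '' I = Ioi 0) (hφ : ∀ z ∈ I, HasDerivAt φ (φ' z) z) {b : ℝ} (hb : 0 < b)
    (h : ∀ z ∈ I, φ z = -b * φ' z) :
    ∃ c > 0, I = univ ∧ ∀ x ∈ I, φ x = c * Real.exp (-x / b) := by
  obtain ⟨c, hc⟩ := exists_forall_eq_mul_exp hIo hIc hφ hb.ne' h
  have hc0 : 0 < c := pos_of_forall_eq_mul himg hc fun z _ => Real.exp_pos _
  refine ⟨c, hc0, Set.eq_of_image_eq_of_injOn himg (subset_univ I) hc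
    (fun x _ y _ hxy => ?_) (fun x _ => mul_pos hc0 (Real.exp_pos _)), hc⟩
  simpa [hb.ne'] using mul_left_cancel₀ hc0.ne' hxy

end

/-- necessity direction of Lemma 3: if the φ-quasi-arithmetic composite is
concave for all parameters, then φ is of HARA form. -/
theorem hara_necessity (I : Set ℝ) (hIo : IsOpen I) (hIc : Convex ℝ I)
    (φ : ℝ → ℝ)
    (himg : φ '' I = Set.Ioi 0)
    (hdiff : ∀ x ∈ I, DifferentiableAt ℝ φ x ∧ DifferentiableAt ℝ (deriv φ) x)
    (hd1 : ∀ x ∈ I, deriv φ x < 0)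
    (hd2 : ∀ x ∈ I, 0 < deriv (deriv φ) x)
    (φinv : ℝ → ℝ)
    (hinv : ∀ x ∈ I, φinv (φ x) = x)
    (hconc : ∀ (N : ℕ), 0 < N → ∀ p v x : Fin N → ℝ,
      (∀ n, 0 < p n) → (∀ n, 0 < v n) → (∀ n, x n ∈ I) →
      ConcaveOn ℝ {s : ℝ | ∀ n, x n + v n * s ∈ I}
        (fun s => φinv (∑ n, p n * φ (x n + v n * s)))) :
    ∃ a > (-1:ℝ), ∃ b : ℝ, ∃ c > (0:ℝ),
      I = {x : ℝ | 0 < a * x + b} ∧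
      (a ≠ 0 → ∀ x ∈ I, φ x = c * (a * x + b) ^ (-1/a)) ∧
      (a = 0 → 0 < b ∧ ∀ x ∈ I, φ x = c * Real.exp (-x / b)) := by
  have hφ : ∀ z ∈ I, HasDerivAt φ (deriv φ z) z := fun z hz => (hdiff z hz).1.hasDerivAt
  have hφ' : ∀ z ∈ I, HasDerivAt (deriv φ) (deriv (deriv φ) z) z :=
    fun z hz => (hdiff z hz).2.hasDerivAt
  have hφpos : MapsTo φ I (Ioi 0) := himg ▸ mapsTo_image φ I
  have hne : I.Nonempty := (himg ▸ nonempty_Ioi : (φ '' I).Nonempty).of_image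
  have hd1' : ∀ z ∈ I, deriv φ z ≠ 0 := fun z hz => (hd1 z hz).ne
  have hconc₁ : ∀ p > 0, ∀ x ∈ I,
      ConcaveOn ℝ {s | x + s ∈ I} fun s => φinv (p * φ (x + s)) := fun p hp x hx => by
      simpa using hconc 1 one_pos (fun _ => p) (fun _ => 1) (fun _ => x) (fun _ => hp)
        (fun _ => one_pos) (fun _ => hx)
  obtain ⟨a, ha, hode⟩ := exists_forall_mul_eq_mul_sq hφpos hd1' hd2 hne fun x hx u hu =>
    mul_sq_deriv_le_of_concaveOn hIo himg (fun x hx => hinv x hx) hφ hφ' hd1 hconc₁ hx hu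
  obtain ⟨b, hb⟩ :=
    exists_forall_eq_neg_mul_of_mul_eq_mul_sq hIo hIc.isPreconnected hφ hφ' hd1' hode
  have hab : ∀ z ∈ I, 0 < a * z + b := fun z hz => by
    nlinarith [show 0 < φ z from hφpos hz, hd1 z hz, hb z hz]
  refine ⟨a, ha, b, ?_⟩
  rcases eq_or_ne a 0 with rfl | ha0
  · obtain ⟨x₀, hx₀⟩ := hne
    have hb0 : 0 < b := by simpa using hab x₀ hx₀
    obtain ⟨c, hc, hI, hφc⟩ :=
      exists_pos_eq_univ_and_eq_mul_exp hIo hIc.isPreconnected himg hφ hb0 (by simpa using hb)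
    exact ⟨c, hc, by simp [hI, hb0], fun h => absurd rfl h, fun _ => ⟨hb0, hφc⟩⟩
  · obtain ⟨c, hc, hI, hφc⟩ :=
      exists_pos_eq_setOf_and_eq_mul_rpow hIo hIc.isPreconnected himg hφ ha0 hab hb
    exact ⟨c, hc, hI, fun _ => hφc, fun h => absurd h ha0⟩
end

section
/- Let γ > 0 and u'(x) = x^{−γ} on (0,∞). Then for any w > 0 and any finite-state specification (π_n, β_n, R_n, Y_n) with all entries positive, the function g(s) = (Σ_n π_n β_n R_n (R_n s + Y_n)^{−γ})^{−1/γ}, defined for s > −min_n Y_n/R_n, is concave, and consequently the consumption function c(w) defined by the Euler equation u'(c(w)) = Σ_n π_n β_n R_n u'(R_n s(w) + Y_n) with c(w) + s(w) = w is concave in w. -/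
/-!
Write `g(s) = F(R s + Y)` with `F(x) = (∑ aₙ xₙ^(-γ))^(-1/γ)` on the positive orthant. `F` is
positively homogeneous, and the weighted Hölder inequality with exponent `γ + 1` shows that it lies
below its tangent hyperplane at every point, a hyperplane through the origin; an infimum of linear
functions is concave, hence so is `g`. It is also nondecreasing. If `c(w) = g(w - c(w))` and `c'` is
the convex combination of `c(w₁)`, `c(w₂)`, concavity of `g` gives `c' ≤ g(w - c')` at the combined
`w`, while `c(w) < c'` would give `g(w - c') ≤ g(w - c(w)) = c(w) < c'` by monotonicity.
-/
open Finset Real Set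

theorem concaveOn_of_exists_linear_majorant {𝕜 E : Type*} [CommRing 𝕜] [PartialOrder 𝕜]
    [IsOrderedRing 𝕜] [AddCommGroup E] [Module 𝕜 E] {s : Set E} {f : E → 𝕜} (hs : Convex 𝕜 s)
    (hf : ∀ z ∈ s, ∃ L : E →ₗ[𝕜] 𝕜, L z = f z ∧ ∀ x ∈ s, f x ≤ L x) : ConcaveOn 𝕜 s f := by
  refine ⟨hs, fun x hx y hy θ η hθ hη hθη => ?_⟩
  obtain ⟨L, hLz, hL⟩ := hf _ (hs hx hy hθ hη hθη)
  calc θ • f x + η • f y ≤ θ • L x + η • L y := by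
        simp only [smul_eq_mul]; gcongr <;> exact hL _ ‹_›
    _ = f (θ • x + η • y) := by rw [← hLz, map_add, map_smul, map_smul]

theorem ConcaveOn.concaveOn_of_eq_apply_sub {𝕜 : Type*} [Field 𝕜] [LinearOrder 𝕜]
    [IsStrictOrderedRing 𝕜] {D W : Set 𝕜} {g c : 𝕜 → 𝕜} (hg : ConcaveOn 𝕜 D g)
    (hg_mono : MonotoneOn g D) (hW : Convex 𝕜 W) (hmem : ∀ w ∈ W, w - c w ∈ D)
    (hc : ∀ w ∈ W, c w = g (w - c w)) : ConcaveOn 𝕜 W c := by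
  refine ⟨hW, fun w₁ h₁ w₂ h₂ θ η hθ hη hθη => ?_⟩
  have hw := hW h₁ h₂ hθ hη hθη
  set w := θ • w₁ + η • w₂
  set c' := θ • c w₁ + η • c w₂
  have hs : θ • (w₁ - c w₁) + η • (w₂ - c w₂) = w - c' := by simp only [w, c', smul_sub]; abel
  have hs_mem : w - c' ∈ D := hs ▸ hg.1 (hmem _ h₁) (hmem _ h₂) hθ hη hθη
  have hc' : c' ≤ g (w - c') := calc
    c' = θ • g (w₁ - c w₁) + η • g (w₂ - c w₂) := by rw [← hc _ h₁, ← hc _ h₂]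
    _ ≤ g (w - c') := hs ▸ hg.2 (hmem _ h₁) (hmem _ h₂) hθ hη hθη
  by_contra! hlt
  have hmono := hg_mono hs_mem (hmem w hw) (by linarith : w - c' ≤ w - c w)
  linarith [hc w hw]

theorem neg_iInf_div_lt_iff {ι : Type*} [Finite ι] [Nonempty ι] {R Y : ι → ℝ}
    (hR : ∀ i, 0 < R i) {s : ℝ} : -(⨅ i, Y i / R i) < s ↔ ∀ i, 0 < R i * s + Y i := by
  have hlt_iff (i : ι) : -(Y i / R i) < s ↔ 0 < R i * s + Y i := by
    rw [← neg_div, div_lt_iff₀' (hR i), neg_lt_iff_pos_add, add_comm]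
  constructor
  · exact fun hs i =>
      (hlt_iff i).1 <| (neg_le_neg <| ciInf_le (finite_range _).bddBelow i).trans_lt hs
  · intro hs
    obtain ⟨i, hi⟩ := exists_eq_ciInf_of_finite (f := fun i => Y i / R i)
    exact hi ▸ (hlt_iff i).2 (hs i)

/-- The paper's `g` is `s ↦ negPowerMean γ (π β R) (R s + Y)`. -/
noncomputable def negPowerMean {ι : Type*} [Fintype ι] (γ : ℝ) (a x : ι → ℝ) : ℝ :=
  (∑ i, a i * x i ^ (-γ)) ^ (-1 / γ)

section NegPowerMean

variable {ι : Type*} [Fintype ι] {γ : ℝ} {a x y : ι → ℝ}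

theorem sum_mul_rpow_neg_le (hγ : 0 < γ) (ha : ∀ i, 0 < a i) (hx : ∀ i, 0 < x i)
    (hy : ∀ i, 0 < y i) :
    ∑ i, a i * y i ^ (-γ) ≤
      (∑ i, a i * y i ^ (-γ - 1) * x i) ^ (1 - (γ + 1)⁻¹) *
        (∑ i, a i * x i ^ (-γ)) ^ (γ + 1)⁻¹ := by
  have holder := inner_le_weight_mul_Lp_of_nonneg univ (p := γ + 1) (by linarith)
    (fun i => a i * y i ^ (-γ - 1) * x i) (fun i => y i / x i)
    (fun i => by have := ha i; have := hx i; have := hy i; positivity)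
    (fun i => by have := hx i; have := hy i; positivity)
  have hw_mul (i : ι) : a i * y i ^ (-γ - 1) * x i * (y i / x i) = a i * y i ^ (-γ) := by
    have := (hx i).ne'; have := (hy i).ne'
    rw [rpow_sub_one (hy i).ne']
    field_simp
  have hw_mul_pow (i : ι) :
      a i * y i ^ (-γ - 1) * x i * (y i / x i) ^ (γ + 1) = a i * x i ^ (-γ) := by
    have := (hx i).ne'; have := (hy i).ne'; have := (rpow_pos_of_pos (hy i) γ).ne'
    rw [rpow_sub_one (hy i).ne', div_rpow (hy i).le (hx i).le, rpow_add_one (hy i).ne',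
      rpow_add_one (hx i).ne', rpow_neg (hy i).le, rpow_neg (hx i).le]
    field_simp
  simpa only [hw_mul, hw_mul_pow] using holder

variable [Nonempty ι]

/-- `negPowerMean γ a y ^ (γ + 1) * a i * y i ^ (-γ - 1)` is the `i`-th partial derivative at
`y`. -/
theorem negPowerMean_le (hγ : 0 < γ) (ha : ∀ i, 0 < a i) (hx : ∀ i, 0 < x i)
    (hy : ∀ i, 0 < y i) :
    negPowerMean γ a x ≤ negPowerMean γ a y ^ (γ + 1) * ∑ i, a i * y i ^ (-γ - 1) * x i := by
  set Sx := ∑ i, a i * x i ^ (-γ)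
  set Sy := ∑ i, a i * y i ^ (-γ)
  set T := ∑ i, a i * y i ^ (-γ - 1) * x i
  have hSx : 0 < Sx := sum_pos (fun i _ => by have := ha i; have := hx i; positivity) univ_nonempty
  have hSy : 0 < Sy := sum_pos (fun i _ => by have := ha i; have := hy i; positivity) univ_nonempty
  have hT : 0 < T :=
    sum_pos (fun i _ => by have := ha i; have := hx i; have := hy i; positivity) univ_nonempty
  have holder_pow : Sy ^ ((γ + 1) / γ) ≤ T * Sx ^ γ⁻¹ := calc
    Sy ^ ((γ + 1) / γ) ≤ (T ^ (1 - (γ + 1)⁻¹) * Sx ^ (γ + 1)⁻¹) ^ ((γ + 1) / γ) :=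
      rpow_le_rpow hSy.le (sum_mul_rpow_neg_le hγ ha hx hy) (by positivity)
    _ = T * Sx ^ γ⁻¹ := by
      have h₁ : (1 - (γ + 1)⁻¹) * ((γ + 1) / γ) = 1 := by field_simp; ring
      have h₂ : (γ + 1)⁻¹ * ((γ + 1) / γ) = γ⁻¹ := by field_simp
      rw [mul_rpow (by positivity) (by positivity), ← rpow_mul hT.le, ← rpow_mul hSx.le, h₁, h₂,
        rpow_one]
  unfold negPowerMean
  rw [← rpow_mul hSy.le, show -1 / γ * (γ + 1) = -((γ + 1) / γ) by ring, rpow_neg hSy.le,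
    neg_div, rpow_neg hSx.le, inv_mul_eq_div, ← one_div,
    div_le_div_iff₀ (by positivity) (by positivity), one_mul, one_div]
  exact holder_pow

theorem negPowerMean_rpow_mul_sum_self (hγ : 0 < γ) (ha : ∀ i, 0 < a i) (hy : ∀ i, 0 < y i) :
    negPowerMean γ a y ^ (γ + 1) * ∑ i, a i * y i ^ (-γ - 1) * y i = negPowerMean γ a y := by
  have hsum : ∑ i, a i * y i ^ (-γ - 1) * y i = ∑ i, a i * y i ^ (-γ) :=
    sum_congr rfl fun i _ => by rw [mul_assoc, ← rpow_add_one (hy i).ne', sub_add_cancel]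
  have hSy : 0 < ∑ i, a i * y i ^ (-γ) :=
    sum_pos (fun i _ => by have := ha i; have := hy i; positivity) univ_nonempty
  rw [hsum, negPowerMean, ← rpow_mul hSy.le, ← rpow_add_one hSy.ne']
  congr 1
  field_simp
  ring

theorem concaveOn_negPowerMean (hγ : 0 < γ) (ha : ∀ i, 0 < a i) :
    ConcaveOn ℝ (univ.pi fun _ => Ioi 0) (negPowerMean γ a) := by
  refine concaveOn_of_exists_linear_majorant (convex_pi fun _ _ => convex_Ioi 0) fun y hy => ?_
  simp only [mem_univ_pi, Set.mem_Ioi] at hy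
  refine ⟨∑ i, (negPowerMean γ a y ^ (γ + 1) * a i * y i ^ (-γ - 1)) • LinearMap.proj i,
    ?_, fun x hx => ?_⟩
  · simpa [mul_sum, mul_assoc] using negPowerMean_rpow_mul_sum_self hγ ha hy
  · simp only [mem_univ_pi, Set.mem_Ioi] at hx
    simpa [mul_sum, mul_assoc] using negPowerMean_le hγ ha hx hy

theorem monotoneOn_negPowerMean (hγ : 0 < γ) (ha : ∀ i, 0 < a i) :
    MonotoneOn (negPowerMean γ a) (univ.pi fun _ => Ioi 0) := by
  intro x hx y hy hxy
  simp only [mem_univ_pi, Set.mem_Ioi] at hx hy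
  have hsum : ∑ i, a i * y i ^ (-γ) ≤ ∑ i, a i * x i ^ (-γ) :=
    sum_le_sum fun i _ => mul_le_mul_of_nonneg_left
      (rpow_le_rpow_of_nonpos (hx i) (hxy i) (by linarith)) (ha i).le
  exact rpow_le_rpow_of_nonpos
    (sum_pos (fun i _ => by have := ha i; have := hy i; positivity) univ_nonempty) hsum
    (div_nonpos_of_nonpos_of_nonneg (by norm_num) hγ.le)

variable {R Y : ι → ℝ}

theorem concaveOn_negPowerMean_mul_add (hγ : 0 < γ) (ha : ∀ i, 0 < a i) (hR : ∀ i, 0 < R i) :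
    ConcaveOn ℝ (Ioi (-(⨅ i, Y i / R i))) fun s => negPowerMean γ a fun i => R i * s + Y i := by
  let A : ℝ →ᵃ[ℝ] ι → ℝ :=
    ⟨fun s i => R i * s + Y i, LinearMap.toSpanSingleton ℝ _ R, fun s t => by
      ext i; simp only [vadd_eq_add, LinearMap.toSpanSingleton_apply, Pi.add_apply,
        Pi.smul_apply, smul_eq_mul]; ring⟩
  refine ((concaveOn_negPowerMean hγ ha).comp_affineMap A).subset (fun s hs => ?_) (convex_Ioi _)
  simpa [A] using (neg_iInf_div_lt_iff hR).1 hs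

theorem monotoneOn_negPowerMean_mul_add (hγ : 0 < γ) (ha : ∀ i, 0 < a i) (hR : ∀ i, 0 < R i) :
    MonotoneOn (fun s => negPowerMean γ a fun i => R i * s + Y i) (Ioi (-(⨅ i, Y i / R i))) :=
  fun s hs t ht hst => monotoneOn_negPowerMean hγ ha
    (by simpa using (neg_iInf_div_lt_iff hR).1 hs) (by simpa using (neg_iInf_div_lt_iff hR).1 ht)
    fun i => by gcongr; exact (hR i).le

end NegPowerMean

theorem crra_consumption_concave_general (γ : ℝ) (hγ : 0 < γ)
    (N : ℕ) (hN : 0 < N)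
    (pr β R Y : Fin N → ℝ)
    (hpr : ∀ n, 0 < pr n) (hβ : ∀ n, 0 < β n) (hR : ∀ n, 0 < R n)
    (c : ℝ → ℝ)
    (hc : ∀ w > (0:ℝ), 0 < c w ∧ (∀ n, 0 < R n * (w - c w) + Y n) ∧
      (c w) ^ (-γ) = ∑ n, pr n * β n * R n * (R n * (w - c w) + Y n) ^ (-γ)) :
    ConcaveOn ℝ (Set.Ioi (-(⨅ n, Y n / R n)))
      (fun s => (∑ n, pr n * β n * R n * (R n * s + Y n) ^ (-γ)) ^ (-1/γ)) ∧
    ConcaveOn ℝ (Set.Ioi 0) c := by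
  have : Nonempty (Fin N) := Fin.pos_iff_nonempty.mp hN
  have ha (n : Fin N) : 0 < pr n * β n * R n := by
    have := hpr n; have := hβ n; have := hR n; positivity
  have hg := concaveOn_negPowerMean_mul_add (Y := Y) hγ ha hR
  refine ⟨hg, hg.concaveOn_of_eq_apply_sub (monotoneOn_negPowerMean_mul_add hγ ha hR)
    (convex_Ioi 0) (fun w hw => (neg_iInf_div_lt_iff hR).2 (hc w hw).2.1) fun w hw => ?_⟩
  obtain ⟨hc_pos, -, euler⟩ := hc w hw
  rw [negPowerMean, ← euler, show -1 / γ = (-γ)⁻¹ by rw [neg_div, one_div, inv_neg],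
    rpow_rpow_inv hc_pos.le (neg_ne_zero.2 hγ.ne')]

/-- for CRRA marginal utility u'(x) = x^(−γ), the function g is concave and
consequently the consumption function is concave. -/
theorem crra_consumption_concave (γ : ℝ) (hγ : 0 < γ)
    (N : ℕ) (hN : 0 < N)
    (pr β R Y : Fin N → ℝ)
    (hpr : ∀ n, 0 < pr n) (hβ : ∀ n, 0 < β n) (hR : ∀ n, 0 < R n) (hY : ∀ n, 0 < Y n)
    (c : ℝ → ℝ)
    (hc : ∀ w > (0:ℝ), 0 < c w ∧ (∀ n, 0 < R n * (w - c w) + Y n) ∧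
      (c w) ^ (-γ) = ∑ n, pr n * β n * R n * (R n * (w - c w) + Y n) ^ (-γ)) :
    ConcaveOn ℝ (Set.Ioi (-(⨅ n, Y n / R n)))
      (fun s => (∑ n, pr n * β n * R n * (R n * s + Y n) ^ (-γ)) ^ (-1/γ)) ∧
    ConcaveOn ℝ (Set.Ioi 0) c :=
  crra_consumption_concave_general γ hγ N hN pr β R Y hpr hβ hR c hc
end

section
/- Let g : S → ℝ be strictly increasing, differentiable, and concave on an open interval S, and suppose for each w in an open interval W there is a unique c(w) with w − c(w) ∈ S and c(w) = g(w − c(w)). Then c is concave on W. -/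
/-- fixed-point concavity lemma: if g is strictly increasing, differentiable
and concave, and c(w) is the unique solution of c = g(w − c), then c is concave. -/
theorem fixed_point_concavity (S W : Set ℝ)
    (hSo : IsOpen S) (hSc : Convex ℝ S)
    (hWo : IsOpen W) (hWc : Convex ℝ W)
    (g : ℝ → ℝ)
    (hgmono : StrictMonoOn g S)
    (hgdiff : ∀ s ∈ S, DifferentiableAt ℝ g s)
    (hgconc : ConcaveOn ℝ S g)
    (c : ℝ → ℝ)
    (hc : ∀ w ∈ W, (w - c w) ∈ S ∧ c w = g (w - c w))
    (huniq : ∀ w ∈ W, ∀ y : ℝ, (w - y) ∈ S → y = g (w - y) → y = c w) :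
    ConcaveOn ℝ W c := by
  refine ⟨hWc, ?_⟩
  intro x hx y hy a b ha hb hab
  set w : ℝ := a • x + b • y with hw
  have hwW : w ∈ W := hWc hx hy ha hb hab
  obtain ⟨hxS, hxg⟩ := hc x hx
  obtain ⟨hyS, hyg⟩ := hc y hy
  obtain ⟨hwS, hwg⟩ := hc w hwW
  set z : ℝ := a • c x + b • c y with hz
  have hzS : w - z ∈ S := by
    have : w - z = a • (x - c x) + b • (y - c y) := by
      simp [hw, hz, smul_eq_mul]; ring
    rw [this]
    exact hSc hxS hyS ha hb hab
  have hge : z ≤ g (w - z) := by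
    have h2 := hgconc.2 hxS hyS ha hb hab
    have heq : a • (x - c x) + b • (y - c y) = w - z := by
      simp [hw, hz, smul_eq_mul]; ring
    rw [heq] at h2
    calc z = a • g (x - c x) + b • g (y - c y) := by rw [← hxg, ← hyg]
    _ ≤ g (w - z) := h2
  by_contra hlt
  push_neg at hlt
  have h1 : w - z < w - c w := by linarith
  have h2 : g (w - z) < g (w - c w) := hgmono hzS hwS h1
  rw [← hwg] at h2
  linarith
end
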